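/- Consider the IFS on X = [0,1] with Λ = {0,1}, ω_0(x) = x/2, ω_1(x) = min(2x, 1), and the Bernoulli(1/2,1/2) measure ℙ on Ω = {0,1}^ℕ. Then ℙ(S) = 1, where S = {σ ∈ Ω : lim_{n→∞} diam(ω_{σ_1} ∘ ⋯ ∘ ω_{σ_n}([0,1])) = 0}; i.e., this IFS is ℙ-weakly hyperbolic. -/

import Mathlib

open Metric Set Filter MeasureTheory

def hcomp {Λ X : Type*} (ω : Λ → X → X) (σ : ℕ → Λ) : ℕ → X → X
  | 0 => id
  | n + 1 => hcomp ω σ n ∘ ω (σ n)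

def IsBernoulli {Λ : Type*} [MeasurableSpace Λ]
    (p : Measure Λ) (P : Measure (ℕ → Λ)) : Prop :=
  IsProbabilityMeasure P ∧
    ∀ (n : ℕ) (A : ℕ → Set Λ), (∀ i, MeasurableSet (A i)) →
      P {σ | ∀ i < n, σ i ∈ A i} = ∏ i ∈ Finset.range n, p (A i)

/-- `ω_0(x) = x / 2` on `[0,1]`. -/
noncomputable def w0 (x : Set.Icc (0:ℝ) 1) : Set.Icc (0:ℝ) 1 :=
  ⟨(x : ℝ) / 2, ⟨by have := x.2.1; linarith, by have := x.2.2; linarith⟩⟩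

/-- `ω_1(x) = min (2x) 1` on `[0,1]`. -/
noncomputable def w1 (x : Set.Icc (0:ℝ) 1) : Set.Icc (0:ℝ) 1 :=
  ⟨min (2 * (x : ℝ)) 1,
    ⟨le_min (by have := x.2.1; linarith) zero_le_one, min_le_right _ _⟩⟩

/-- The IFS with parameter space `{0, 1}` (encoded by `Bool`). -/
noncomputable def wmap : Bool → Set.Icc (0:ℝ) 1 → Set.Icc (0:ℝ) 1
  | false => w0
  | true => w1

/-- The set `S` where `diam (ω_{σ_1} ∘ ⋯ ∘ ω_{σ_n}([0,1])) → 0`. -/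
def Sset : Set (ℕ → Bool) :=
  {σ | Tendsto (fun n => Metric.diam (Set.range (hcomp wmap σ n))) atTop (nhds 0)}

/-!
Since `ω_0 x = x / 2` and `ω_1 x ≤ 2 x`, the image of `[0,1]` under `ω_{σ_1} ∘ ⋯ ∘ ω_{σ_n}` lies
in `[0, 2^{-W_n}]`, where `W_n` is the number of `0`s minus the number of `1`s among
`σ_1, …, σ_n`. These images decrease in `n`, so their diameters tend to `0` as soon as `W` is
unbounded above. Under `ℙ`, `W` is a martingale with increments `±1`; by the one-sided martingale
bound it is a.s. either convergent or unbounded above, and increments `±1` rule out convergence.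
-/

open ProbabilityTheory
open scoped Topology

def bitSign (b : Bool) : ℝ := if b then -1 else 1

def walk (σ : ℕ → Bool) (n : ℕ) : ℝ := ∑ k ∈ Finset.range n, bitSign (σ k)

lemma walk_succ (σ : ℕ → Bool) (n : ℕ) : walk σ (n + 1) = walk σ n + bitSign (σ n) :=
  Finset.sum_range_succ _ _

lemma coe_wmap_le (b : Bool) (x : Icc (0:ℝ) 1) : (wmap b x : ℝ) ≤ 2 ^ (-bitSign b) * x := by
  cases b
  · simp [wmap, w0, bitSign, Real.rpow_neg_one, div_eq_inv_mul]
  · simp [wmap, w1, bitSign]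

lemma coe_hcomp_wmap_le (σ : ℕ → Bool) (n : ℕ) (x : Icc (0:ℝ) 1) :
    ((hcomp wmap σ n x : Icc (0:ℝ) 1) : ℝ) ≤ 2 ^ (-walk σ n) * x := by
  induction n generalizing x with
  | zero => simp [hcomp, walk]
  | succ n ih =>
    calc ((hcomp wmap σ (n + 1) x : Icc (0:ℝ) 1) : ℝ) = hcomp wmap σ n (wmap (σ n) x) := rfl
      _ ≤ 2 ^ (-walk σ n) * (wmap (σ n) x : ℝ) := ih _
      _ ≤ 2 ^ (-walk σ n) * (2 ^ (-bitSign (σ n)) * x) := by gcongr; exact coe_wmap_le _ _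
      _ = 2 ^ (-walk σ (n + 1)) * x := by
        rw [walk_succ, neg_add, Real.rpow_add two_pos, mul_assoc]

lemma diam_range_hcomp_wmap_le (σ : ℕ → Bool) (n : ℕ) :
    diam (range (hcomp wmap σ n)) ≤ 2 ^ (-walk σ n) := by
  have hmem : ∀ x, ((hcomp wmap σ n x : Icc (0:ℝ) 1) : ℝ) ∈ Icc 0 (2 ^ (-walk σ n)) := fun x =>
    ⟨(hcomp wmap σ n x).2.1, (coe_hcomp_wmap_le σ n x).trans <|
      mul_le_of_le_one_right (by positivity) x.2.2⟩
  refine diam_le_of_forall_dist_le (by positivity) ?_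
  rintro _ ⟨x, rfl⟩ _ ⟨y, rfl⟩
  simpa [Subtype.dist_eq] using Real.dist_le_of_mem_Icc (hmem x) (hmem y)

lemma range_hcomp_succ_subset {Λ X : Type*} (ω : Λ → X → X) (σ : ℕ → Λ) (n : ℕ) :
    range (hcomp ω σ (n + 1)) ⊆ range (hcomp ω σ n) :=
  range_comp_subset_range _ _

lemma antitone_diam_range_hcomp {Λ X : Type*} [PseudoMetricSpace X] [CompactSpace X]
    (ω : Λ → X → X) (σ : ℕ → Λ) : Antitone fun n => diam (range (hcomp ω σ n)) :=
  antitone_nat_of_succ_le fun n =>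
    diam_mono (α := X) (range_hcomp_succ_subset ω σ n) isBounded_of_compactSpace

lemma mem_Sset_of_not_bddAbove_walk {σ : ℕ → Bool} (h : ¬ BddAbove (range (walk σ))) :
    σ ∈ Sset := by
  refine Metric.tendsto_atTop.2 fun ε hε => ?_
  obtain ⟨K, hK⟩ := exists_pow_lt_of_lt_one hε (by norm_num : (1 / 2 : ℝ) < 1)
  obtain ⟨_, ⟨m, rfl⟩, hm⟩ := not_bddAbove_iff.1 h K
  refine ⟨m, fun n hn => ?_⟩
  rw [Real.dist_eq, sub_zero, abs_of_nonneg diam_nonneg]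
  calc diam (range (hcomp wmap σ n)) ≤ diam (range (hcomp wmap σ m)) :=
        antitone_diam_range_hcomp wmap σ hn
    _ ≤ 2 ^ (-walk σ m) := diam_range_hcomp_wmap_le σ m
    _ ≤ 2 ^ (-(K : ℝ)) := Real.rpow_le_rpow_of_exponent_le one_le_two (by linarith)
    _ = (1 / 2) ^ K := by rw [Real.rpow_neg zero_le_two, Real.rpow_natCast, one_div, inv_pow]
    _ < ε := hK

section RandomWalk

variable {Ω : Type*} [MeasurableSpace Ω] {μ : Measure Ω} {X : ℕ → Ω → ℝ}

lemma martingale_sum_range_succ (hX : ∀ i, StronglyMeasurable (X i)) (hind : iIndepFun X μ)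
    (hint : ∀ i, Integrable (X i) μ) (hmean : ∀ i, μ[X i] = 0) :
    Martingale (fun n => ∑ k ∈ Finset.range (n + 1), X k) (Filtration.natural X hX) μ := by
  have := hind.isProbabilityMeasure
  refine martingale_of_condExp_sub_eq_zero_nat (fun n => ?_)
    (fun n => integrable_finsetSum' _ fun k _ => hint k) (fun n => ?_)
  · refine Finset.stronglyMeasurable_sum _ fun k hk => ?_
    exact (Filtration.stronglyAdapted_natural hX k).mono
      ((Filtration.natural X hX).mono (Finset.mem_range_succ_iff.1 hk))
  · rw [Finset.sum_range_succ _ (n + 1), add_sub_cancel_left]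
    filter_upwards [hind.condExp_natural_ae_eq_of_lt hX n.lt_succ_self] with ω hω
    rw [hω, hmean]
    rfl

lemma ae_not_bddAbove_sum_range (hX : ∀ i, StronglyMeasurable (X i)) (hind : iIndepFun X μ)
    (hmean : ∀ i, μ[X i] = 0) (habs : ∀ i ω, |X i ω| = 1) :
    ∀ᵐ ω ∂μ, ¬ BddAbove (range fun n => ∑ k ∈ Finset.range n, X k ω) := by
  have := hind.isProbabilityMeasure
  have hint i : Integrable (X i) μ :=
    .of_bound (hX i).aestronglyMeasurable 1 (.of_forall fun ω => (habs i ω).le)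
  have hmart := martingale_sum_range_succ hX hind hint hmean
  have hincr i ω : ∑ k ∈ Finset.range (i + 1 + 1), X k ω - ∑ k ∈ Finset.range (i + 1), X k ω
      = X (i + 1) ω := by
    rw [Finset.sum_range_succ _ (i + 1), add_sub_cancel_left]
  have hbdd : ∀ᵐ ω ∂μ, ∀ i, |(∑ k ∈ Finset.range (i + 1 + 1), X k) ω
      - (∑ k ∈ Finset.range (i + 1), X k) ω| ≤ ((1 : NNReal) : ℝ) :=
    .of_forall fun ω i => by simp only [Finset.sum_apply, hincr, habs, NNReal.coe_one, le_refl]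
  filter_upwards [hmart.submartingale.bddAbove_iff_exists_tendsto hbdd] with ω hω hbddω
  obtain ⟨c, hc⟩ := hω.1 <| by
    obtain ⟨b, hb⟩ := hbddω
    exact ⟨b, forall_mem_range.2 fun n => by simpa using hb ⟨n + 1, rfl⟩⟩
  have hlim : Tendsto (fun i => X (i + 1) ω) atTop (𝓝 0) := by
    simpa [Finset.sum_apply, hincr] using (hc.comp (tendsto_add_atTop_nat 1)).sub hc
  obtain ⟨i, hi⟩ := (Metric.tendsto_atTop.1 hlim 1 one_pos)
  simpa [habs] using hi i le_rfl

end RandomWalk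

namespace IsBernoulli

variable {Λ : Type*} [MeasurableSpace Λ] {p : Measure Λ} [IsProbabilityMeasure p]
  {P : Measure (ℕ → Λ)}

lemma measure_iInter_preimage_eval (hP : IsBernoulli p P) (S : Finset ℕ) {A : ℕ → Set Λ}
    (hA : ∀ i ∈ S, MeasurableSet (A i)) :
    P (⋂ i ∈ S, (fun σ => σ i) ⁻¹' A i) = ∏ i ∈ S, p (A i) := by
  classical
  obtain ⟨n, hn⟩ := S.exists_nat_subset_range
  let B i := if i ∈ S then A i else univ
  have hB i : MeasurableSet (B i) := by
    by_cases hi : i ∈ S <;> simp [B, hi, hA]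
  have hcyl : {σ : ℕ → Λ | ∀ i < n, σ i ∈ B i} = ⋂ i ∈ S, (fun σ => σ i) ⁻¹' A i := by
    ext σ
    simp only [mem_ofPred_eq, mem_iInter, mem_preimage, B]
    refine ⟨fun h i hi => by simpa [hi] using h i (Finset.mem_range.1 (hn hi)), fun h i _ => ?_⟩
    split_ifs with hi
    exacts [h i hi, mem_univ _]
  rw [← hcyl, hP.2 n B hB]
  simp only [B, apply_ite p, measure_univ, Finset.prod_ite_mem, Finset.inter_eq_right.2 hn]

lemma measure_preimage_eval (hP : IsBernoulli p P) (i : ℕ) {A : Set Λ} (hA : MeasurableSet A) :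
    P ((fun σ => σ i) ⁻¹' A) = p A := by
  simpa using hP.measure_iInter_preimage_eval {i} (A := fun _ => A) (by simpa using hA)

lemma iIndepFun_eval (hP : IsBernoulli p P) : iIndepFun (fun i (σ : ℕ → Λ) => σ i) P := by
  rw [iIndepFun_iff_measure_inter_preimage_eq_mul]
  intro S A hA
  rw [hP.measure_iInter_preimage_eval S hA]
  exact Finset.prod_congr rfl fun i hi => (hP.measure_preimage_eval i (hA i hi)).symm

lemma map_eval (hP : IsBernoulli p P) (i : ℕ) : P.map (fun σ => σ i) = p :=
  Measure.ext fun A hA => by rw [Measure.map_apply (measurable_pi_apply i) hA,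
    hP.measure_preimage_eval i hA]

end IsBernoulli

lemma integral_bitSign_eval {p : Measure Bool} [IsProbabilityMeasure p]
    (hp : ∀ b : Bool, p {b} = 1 / 2) {P : Measure (ℕ → Bool)} (hP : IsBernoulli p P) (i : ℕ) :
    ∫ σ, bitSign (σ i) ∂P = 0 := by
  rw [← integral_map (measurable_pi_apply i).aemeasurable (by fun_prop), hP.map_eval,
    integral_fintype .of_finite]
  simp [measureReal_def, hp, bitSign]

theorem stmt16 (p : Measure Bool) [IsProbabilityMeasure p]
    (hp : ∀ b : Bool, p {b} = 1 / 2)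
    (P : Measure (ℕ → Bool)) (hP : IsBernoulli p P) :
    P Sset = 1 := by
  have hsteps : iIndepFun (fun i (σ : ℕ → Bool) => bitSign (σ i)) P :=
    hP.iIndepFun_eval.comp (fun _ => bitSign) fun _ => .of_discrete
  have hwalk : ∀ᵐ σ ∂P, ¬ BddAbove (range (walk σ)) :=
    ae_not_bddAbove_sum_range
      (fun i => ((measurable_of_finite bitSign).comp (measurable_pi_apply i)).stronglyMeasurable)
      hsteps (integral_bitSign_eval hp hP) fun i σ => by cases σ i <;> simp [bitSign]
  have hS : Sset =ᵐ[P] univ :=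
    ae_eq_univ.2 (ae_iff.1 (hwalk.mono fun _ => mem_Sset_of_not_bddAbove_walk))
  rw [measure_congr hS, hP.1.measure_univ]
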